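/- Let m be an n×n real matrix and define A = I_n ⊗ m + m ⊗ I_n (Kronecker sum) acting on vectorized matrices. Then for any n×n matrix σ², the matrix ς_t := ∫_0^t e^{(t-s)m} σ² e^{(t-s)m^T} ds satisfies vec(ς_t) = A^{-1}(e^{At} - I_{n²}) vec(σ²), provided A is invertible. -/

import Mathlib

open Matrix Kronecker

/-- The column-stacking `vec` operator: `vec M (j, i) = M i j`
(the outer index is the column index). -/
def vec {n : ℕ} (M : Matrix (Fin n) (Fin n) ℝ) : Fin n × Fin n → ℝ :=
  fun p => M p.2 p.1

/-- Left Kronecker multiplication by `1` as a ring hom. -/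
def kroneckerLeftOne (n : ℕ) :
    Matrix (Fin n) (Fin n) ℝ →+* Matrix (Fin n × Fin n) (Fin n × Fin n) ℝ where
  toFun B := (1 : Matrix (Fin n) (Fin n) ℝ) ⊗ₖ B
  map_one' := Matrix.one_kronecker_one
  map_mul' B C := by rw [← Matrix.mul_kronecker_mul, Matrix.one_mul]
  map_zero' := by ext ⟨a, b⟩ ⟨c, d⟩; simp
  map_add' B C := by ext ⟨a, b⟩ ⟨c, d⟩; simp [mul_add]

/-- Right Kronecker multiplication by `1` as a ring hom. -/
def kroneckerRightOne (n : ℕ) :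
    Matrix (Fin n) (Fin n) ℝ →+* Matrix (Fin n × Fin n) (Fin n × Fin n) ℝ where
  toFun B := B ⊗ₖ (1 : Matrix (Fin n) (Fin n) ℝ)
  map_one' := Matrix.one_kronecker_one
  map_mul' B C := by rw [← Matrix.mul_kronecker_mul, Matrix.one_mul]
  map_zero' := by ext ⟨a, b⟩ ⟨c, d⟩; simp
  map_add' B C := by ext ⟨a, b⟩ ⟨c, d⟩; simp [add_mul]

lemma continuous_kroneckerLeftOne (n : ℕ) : Continuous (kroneckerLeftOne n) := by
  refine continuous_pi fun p => continuous_pi fun q => ?_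
  exact continuous_const.mul ((continuous_apply q.2).comp (continuous_apply p.2))

lemma continuous_kroneckerRightOne (n : ℕ) : Continuous (kroneckerRightOne n) := by
  refine continuous_pi fun p => continuous_pi fun q => ?_
  have h : Continuous fun B : Matrix (Fin n) (Fin n) ℝ => B p.1 q.1 :=
    (continuous_apply q.1).comp (continuous_apply p.1)
  exact h.mul continuous_const

lemma exp_kronecker_one_left (n : ℕ) (B : Matrix (Fin n) (Fin n) ℝ) :
    NormedSpace.exp ((1 : Matrix (Fin n) (Fin n) ℝ) ⊗ₖ B)
      = (1 : Matrix (Fin n) (Fin n) ℝ) ⊗ₖ NormedSpace.exp B := by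
  letI : SeminormedRing (Matrix (Fin n) (Fin n) ℝ) := Matrix.linftyOpSemiNormedRing
  letI : NormedRing (Matrix (Fin n) (Fin n) ℝ) := Matrix.linftyOpNormedRing
  letI : NormedAlgebra ℝ (Matrix (Fin n) (Fin n) ℝ) := Matrix.linftyOpNormedAlgebra
  letI : NormedRing (Matrix (Fin n × Fin n) (Fin n × Fin n) ℝ) := Matrix.linftyOpNormedRing
  letI : NormedAlgebra ℝ (Matrix (Fin n × Fin n) (Fin n × Fin n) ℝ) :=
    Matrix.linftyOpNormedAlgebra
  letI : NormedAlgebra ℚ (Matrix (Fin n) (Fin n) ℝ) := Matrix.linftyOpNormedAlgebra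
  exact (NormedSpace.map_exp (kroneckerLeftOne n) (continuous_kroneckerLeftOne n) B).symm

lemma exp_kronecker_one_right (n : ℕ) (B : Matrix (Fin n) (Fin n) ℝ) :
    NormedSpace.exp (B ⊗ₖ (1 : Matrix (Fin n) (Fin n) ℝ))
      = NormedSpace.exp B ⊗ₖ (1 : Matrix (Fin n) (Fin n) ℝ) := by
  letI : SeminormedRing (Matrix (Fin n) (Fin n) ℝ) := Matrix.linftyOpSemiNormedRing
  letI : NormedRing (Matrix (Fin n) (Fin n) ℝ) := Matrix.linftyOpNormedRing
  letI : NormedAlgebra ℝ (Matrix (Fin n) (Fin n) ℝ) := Matrix.linftyOpNormedAlgebra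
  letI : NormedRing (Matrix (Fin n × Fin n) (Fin n × Fin n) ℝ) := Matrix.linftyOpNormedRing
  letI : NormedAlgebra ℝ (Matrix (Fin n × Fin n) (Fin n × Fin n) ℝ) :=
    Matrix.linftyOpNormedAlgebra
  letI : NormedAlgebra ℚ (Matrix (Fin n) (Fin n) ℝ) := Matrix.linftyOpNormedAlgebra
  exact (NormedSpace.map_exp (kroneckerRightOne n) (continuous_kroneckerRightOne n) B).symm

/-- With `A = Iₙ ⊗ m + m ⊗ Iₙ` (Kronecker sum) invertible, the matrix
`ς_t := ∫_0^t e^{(t-s)m} σ² e^{(t-s)mᵀ} ds` (defined entrywise) satisfies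
`vec(ς_t) = A⁻¹(e^{At} - I_{n²}) vec(σ²)`. -/
theorem stmt2 (n : ℕ) (m σ2 : Matrix (Fin n) (Fin n) ℝ) (t : ℝ)
    (A : Matrix (Fin n × Fin n) (Fin n × Fin n) ℝ)
    (hA : A = (1 : Matrix (Fin n) (Fin n) ℝ) ⊗ₖ m + m ⊗ₖ (1 : Matrix (Fin n) (Fin n) ℝ))
    (hAinv : IsUnit A.det)
    (ς : Matrix (Fin n) (Fin n) ℝ)
    (hς : ∀ i j, ς i j = ∫ s in (0:ℝ)..t,
      ((NormedSpace.exp ((t - s) • m)) * σ2 * (NormedSpace.exp ((t - s) • m))ᵀ) i j) :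
    _root_.vec ς = (A⁻¹ * (NormedSpace.exp (t • A) - 1)).mulVec (_root_.vec σ2) := by
  classical
  -- Step 1: exp(τ • A) = exp(τ • m) ⊗ₖ exp(τ • m)
  have hkron : ∀ τ : ℝ, NormedSpace.exp (τ • A)
      = NormedSpace.exp (τ • m) ⊗ₖ NormedSpace.exp (τ • m) := by
    intro τ
    have h1 : τ • A = (1 : Matrix (Fin n) (Fin n) ℝ) ⊗ₖ (τ • m)
        + (τ • m) ⊗ₖ (1 : Matrix (Fin n) (Fin n) ℝ) := by
      rw [hA, smul_add, Matrix.kronecker_smul, Matrix.smul_kronecker]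
    have hcomm : Commute ((1 : Matrix (Fin n) (Fin n) ℝ) ⊗ₖ (τ • m))
        ((τ • m) ⊗ₖ (1 : Matrix (Fin n) (Fin n) ℝ)) := by
      show _ = _
      rw [← Matrix.mul_kronecker_mul, ← Matrix.mul_kronecker_mul, Matrix.one_mul,
        Matrix.mul_one]
    rw [h1, Matrix.exp_add_of_commute _ _ hcomm, exp_kronecker_one_left,
      exp_kronecker_one_right, ← Matrix.mul_kronecker_mul, Matrix.one_mul, Matrix.mul_one]
  -- Step 2: vec identity, entrywise
  have hvec : ∀ (τ : ℝ) (p : Fin n × Fin n),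
      ((NormedSpace.exp (τ • m)) * σ2 * (NormedSpace.exp (τ • m))ᵀ) p.2 p.1
        = ∑ q : Fin n × Fin n, (NormedSpace.exp (τ • A)) p q * _root_.vec σ2 q := by
    intro τ p
    rw [hkron τ]
    simp only [Matrix.mul_apply, Matrix.transpose_apply, Matrix.kroneckerMap_apply, _root_.vec,
      Fintype.sum_prod_type, Finset.sum_mul]
    exact Finset.sum_congr rfl fun x _ => Finset.sum_congr rfl fun y _ => by ring
  -- Step 3: continuity of entries of exp(s • A)
  have hcont : ∀ p q : Fin n × Fin n,
      Continuous (fun s : ℝ => (NormedSpace.exp (s • A)) p q) := by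
    intro p q
    letI : NormedRing (Matrix (Fin n × Fin n) (Fin n × Fin n) ℝ) := Matrix.linftyOpNormedRing
    letI : NormedAlgebra ℝ (Matrix (Fin n × Fin n) (Fin n × Fin n) ℝ) :=
      Matrix.linftyOpNormedAlgebra
    letI : NormedAlgebra ℚ (Matrix (Fin n × Fin n) (Fin n × Fin n) ℝ) :=
      Matrix.linftyOpNormedAlgebra
    have h1 : Continuous (fun s : ℝ => NormedSpace.exp (s • A)) :=
      NormedSpace.exp_continuous.comp (continuous_id.smul continuous_const)
    exact (continuous_apply q).comp ((continuous_apply p).comp h1)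
  -- Step 4: derivative of entries of A⁻¹ * exp(s • A)
  have hder : ∀ (p q : Fin n × Fin n) (s : ℝ),
      HasDerivAt (fun u : ℝ => (A⁻¹ * NormedSpace.exp (u • A)) p q)
        ((NormedSpace.exp (s • A)) p q) s := by
    intro p q s
    letI : NormedRing (Matrix (Fin n × Fin n) (Fin n × Fin n) ℝ) := Matrix.linftyOpNormedRing
    letI : NormedAlgebra ℝ (Matrix (Fin n × Fin n) (Fin n × Fin n) ℝ) :=
      Matrix.linftyOpNormedAlgebra
    have h1 : HasDerivAt (fun u : ℝ => NormedSpace.exp (u • A))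
        (A * NormedSpace.exp (s • A)) s := hasDerivAt_exp_smul_const' A s
    have h2 := h1.const_mul (A⁻¹)
    let e : Matrix (Fin n × Fin n) (Fin n × Fin n) ℝ →ₗ[ℝ] ℝ :=
      { toFun := fun M => M p q, map_add' := fun _ _ => rfl, map_smul' := fun _ _ => rfl }
    have h3 := (LinearMap.toContinuousLinearMap e).hasFDerivAt.comp_hasDerivAt s h2
    have h4 : A⁻¹ * (A * NormedSpace.exp (s • A)) = NormedSpace.exp (s • A) := by
      rw [← Matrix.mul_assoc, Matrix.nonsing_inv_mul _ hAinv, Matrix.one_mul]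
    rw [h4] at h3
    exact h3
  -- Step 5: entrywise integral of exp(s • A)
  have hint : ∀ p q : Fin n × Fin n,
      (∫ s in (0:ℝ)..t, (NormedSpace.exp (s • A)) p q)
        = (A⁻¹ * (NormedSpace.exp (t • A) - 1)) p q := by
    intro p q
    rw [intervalIntegral.integral_eq_sub_of_hasDerivAt (fun s _ => hder p q s)
      ((hcont p q).intervalIntegrable 0 t)]
    simp [Matrix.mul_sub, Matrix.sub_apply, NormedSpace.exp_zero]
  funext p
  show ς p.2 p.1 = _
  rw [hς p.2 p.1]
  have step1 : (∫ s in (0:ℝ)..t,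
      ((NormedSpace.exp ((t - s) • m)) * σ2 * (NormedSpace.exp ((t - s) • m))ᵀ) p.2 p.1)
      = ∫ s in (0:ℝ)..t, ∑ q : Fin n × Fin n,
          (NormedSpace.exp ((t - s) • A)) p q * _root_.vec σ2 q :=
    intervalIntegral.integral_congr fun s _ => hvec (t - s) p
  have step2 : (∫ s in (0:ℝ)..t, ∑ q : Fin n × Fin n,
        (NormedSpace.exp ((t - s) • A)) p q * _root_.vec σ2 q)
      = ∫ s in (0:ℝ)..t, ∑ q : Fin n × Fin n,
        (NormedSpace.exp (s • A)) p q * _root_.vec σ2 q := by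
    have := intervalIntegral.integral_comp_sub_left
      (fun s => ∑ q : Fin n × Fin n, (NormedSpace.exp (s • A)) p q * _root_.vec σ2 q) t
      (a := 0) (b := t)
    simpa using this
  rw [step1, step2, intervalIntegral.integral_finset_sum
    (f := fun q s => (NormedSpace.exp (s • A)) p q * _root_.vec σ2 q)
    (fun q _ => ((hcont p q).mul continuous_const).intervalIntegrable 0 t)]
  simp only [intervalIntegral.integral_mul_const, hint]
  simp [Matrix.mulVec, dotProduct]
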